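/- arXiv:1503.06843 — 2 statements merged into one kernel-verified Lean document; each statement's English description precedes it below -/
import Mathlib

section
/- Let n ≥ 3 be odd and set k = (n+1)/2. Define the constants A = 2^{k−1}(C(n−2, k−2) + C(n−2, k−1)) and B = 2^k · C(n−1, k), where C(·,·) denotes the binomial coefficient. Let h : ℝ → ℝ be any twice differentiable function satisfying h''(t) = (1 − B e^{kt}) / (A e^{(k−1)t}) for all t ∈ ℝ. Then the function u : ℝ^{n−1} × ℝ → ℝ defined by u(x, t) = |x|² eᵗ + h(t) satisfies σ_k(D²u(x, t)) = 1 for every (x, t) ∈ ℝ^{n−1} × ℝ. -/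
/-!
The Hessian of `u(x, t) = |x|² eᵗ + h(t)` is an arrow matrix: `2eᵗ·I` on the `x`-block, border
`2xᵢeᵗ` and corner `|x|²eᵗ + h''(t)`. A principal `k`-minor of an arrow matrix `(a, b, c)` either
avoids the corner, and is then `aᵏ`, or is again an arrow matrix, whose determinant is
`aᵏ⁻¹c - aᵏ⁻²|b|²` by a Schur complement. Summing over the minors of the `n × n` Hessian gives
`σ_k = C(n-1,k)aᵏ + C(n-1,k-1)aᵏ⁻¹c - C(n-2,k-2)aᵏ⁻²|b|²`. For `n = 2k - 1` the two `|x|²`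
contributions cancel since `C(2k-2,k-1) = 2C(2k-3,k-2)`, leaving `B eᵏᵗ + A e⁽ᵏ⁻¹⁾ᵗ h''(t)`,
which is `1` by the ODE.
-/

/-- The `k`-th elementary symmetric function of a square real matrix:
the sum of its `k × k` principal minors. -/
noncomputable def sigmaK {ι : Type*} [Fintype ι] [DecidableEq ι] (k : ℕ)
    (A : Matrix ι ι ℝ) : ℝ :=
  ∑ s ∈ (Finset.univ : Finset ι).powersetCard k,
    Matrix.det (fun i j : {x : ι // x ∈ s} => A i.1 j.1)

/-- The Hessian matrix of `u` at `x`, with entries `∂ᵢ∂ⱼ u (x)`. -/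
noncomputable def hessian {ι : Type*} [Fintype ι] [DecidableEq ι]
    (u : (ι → ℝ) → ℝ) (x : ι → ℝ) : Matrix ι ι ℝ :=
  fun i j => fderiv ℝ (fun y => fderiv ℝ u y (Pi.single j 1)) x (Pi.single i 1)

open Finset Matrix

namespace Finset

variable {α M : Type*} [DecidableEq α] [AddCommMonoid M]

theorem sum_powersetCard_succ_insert {x : α} {s : Finset α} (hx : x ∉ s) (n : ℕ)
    (f : Finset α → M) :
    ∑ t ∈ powersetCard (n + 1) (insert x s), f t =
      ∑ t ∈ powersetCard (n + 1) s, f t + ∑ t ∈ powersetCard n s, f (insert x t) := by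
  have hdisj : Disjoint (powersetCard (n + 1) s) ((powersetCard n s).image (insert x)) := by
    refine disjoint_left.2 fun t ht ht' => ?_
    obtain ⟨t', -, rfl⟩ := mem_image.1 ht'
    exact hx ((mem_powersetCard.1 ht).1 (mem_insert_self x t'))
  have hinj : Set.InjOn (insert x) (powersetCard n s : Set (Finset α)) := fun t ht t' ht' h => by
    rw [← erase_insert (fun h => hx ((mem_powersetCard.1 ht).1 h)),
      ← erase_insert (fun h => hx ((mem_powersetCard.1 ht').1 h)), h]
  rw [powersetCard_succ_insert hx, sum_union hdisj, sum_image hinj]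

theorem sum_powersetCard_sum (s : Finset α) (n : ℕ) (f : α → M) :
    ∑ t ∈ powersetCard (n + 1) s, ∑ x ∈ t, f x = (#s - 1).choose n • ∑ x ∈ s, f x := by
  calc ∑ t ∈ powersetCard (n + 1) s, ∑ x ∈ t, f x
      = ∑ x ∈ s, #{t ∈ powersetCard (n + 1) s | {x} ⊆ t} • f x := by
        rw [sum_comm' (t' := s) (s' := fun x => {t ∈ powersetCard (n + 1) s | {x} ⊆ t})]
        · simp
        · simp only [mem_filter, mem_powersetCard, singleton_subset_iff]
          tauto
    _ = (#s - 1).choose n • ∑ x ∈ s, f x := by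
        rw [smul_sum]
        refine sum_congr rfl fun x hx => ?_
        rw [card_filter_powersetCard_subset _ _ _ (singleton_subset_iff.2 hx) (by simp),
          card_singleton, Nat.add_sub_cancel]

end Finset

section ArrowMatrix

variable {K κ : Type*} [Field K] [DecidableEq κ]

/-- The value `g p` is never read. -/
def arrowMatrix (p : κ) (a c : K) (g : κ → K) : Matrix κ κ K :=
  of fun x y => if x = p then (if y = p then c else g y)
    else if y = p then g x else if x = y then a else 0

variable (p : κ) (a c : K) (g : κ → K)

theorem arrowMatrix_subtype_of_mem {s : Finset κ} (hp : p ∈ s) :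
    (fun x y : s => arrowMatrix p a c g x y) = arrowMatrix ⟨p, hp⟩ a c (g ∘ Subtype.val) := by
  ext x y
  simp only [arrowMatrix, of_apply, Subtype.ext_iff, Function.comp_apply]

theorem arrowMatrix_subtype_of_notMem {s : Finset κ} (hp : p ∉ s) :
    (fun x y : s => arrowMatrix p a c g x y) = diagonal fun _ => a := by
  ext x y
  have hx : x.1 ≠ p := fun h => hp (h ▸ x.2)
  have hy : y.1 ≠ p := fun h => hp (h ▸ y.2)
  simp only [arrowMatrix, of_apply, diagonal, hx, hy, Subtype.ext_iff, if_false]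

variable [Fintype κ]

theorem det_arrowMatrix (ha : a ≠ 0) :
    (arrowMatrix p a c g).det =
      a ^ (Fintype.card κ - 1) * c - a ^ (Fintype.card κ - 2) * ∑ x ∈ univ.erase p, g x ^ 2 := by
  let e : {x // x = p} ⊕ {x // x ≠ p} ≃ κ := Equiv.sumCompl _
  have : Unique {x // x = p} := ⟨⟨⟨p, rfl⟩⟩, fun y => Subtype.ext y.2⟩
  let _ : Invertible (a • 1 : Matrix {x // x ≠ p} {x // x ≠ p} K) :=
    ⟨a⁻¹ • 1, by simp [smul_smul, ha], by simp [smul_smul, ha]⟩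
  have hblocks : (arrowMatrix p a c g).submatrix e e =
      fromBlocks (of fun _ _ => c) (of fun _ (y : {x // x ≠ p}) => g y)
        (of fun (x : {x // x ≠ p}) _ => g x) (a • 1) := by
    ext (x | x) (y | y) <;> simp [e, arrowMatrix, x.2, y.2, one_apply, Subtype.ext_iff]
  have hcard : Fintype.card κ = Fintype.card {x // x ≠ p} + 1 := by
    rw [Fintype.card_subtype_compl, Fintype.card_subtype_eq]
    have := Fintype.card_pos_iff.2 ⟨p⟩
    omega
  have hsum : ∑ x ∈ univ.erase p, g x ^ 2 = ∑ x : {x // x ≠ p}, g x ^ 2 :=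
    sum_subtype _ (by simp) _
  rw [← det_submatrix_equiv_self e, hblocks, det_fromBlocks₂₂, det_smul, det_one, det_unique,
    hcard, hsum]
  have hinv : ⅟(a • 1 : Matrix {x // x ≠ p} {x // x ≠ p} K) = a⁻¹ • 1 := rfl
  simp only [hinv, Matrix.mul_smul, Matrix.mul_one, Matrix.smul_mul, Matrix.sub_apply,
    Matrix.smul_apply, mul_apply, of_apply, smul_eq_mul, ← sq, Nat.add_sub_cancel, mul_one]
  cases hm : Fintype.card {x // x ≠ p} with
  | zero => simp [Fintype.card_eq_zero_iff.1 hm]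
  | succ m =>
    rw [show m + 1 + 1 - 2 = m by omega, pow_succ]
    field_simp

end ArrowMatrix

theorem sigmaK_arrowMatrix {κ : Type*} [Fintype κ] [DecidableEq κ] (p : κ) {a : ℝ} (ha : a ≠ 0)
    (c : ℝ) (g : κ → ℝ) (k : ℕ) :
    sigmaK (k + 2) (arrowMatrix p a c g) =
      (Fintype.card κ - 1).choose (k + 2) * a ^ (k + 2)
        + (Fintype.card κ - 1).choose (k + 1) * a ^ (k + 1) * c
        - (Fintype.card κ - 2).choose k * a ^ k * ∑ x ∈ univ.erase p, g x ^ 2 := by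
  set U := univ.erase p
  have hU : #U = Fintype.card κ - 1 := card_erase_of_mem (mem_univ p)
  have hminor_of_notMem : ∀ s ∈ powersetCard (k + 2) U,
      det (fun x y : s => arrowMatrix p a c g x y) = a ^ (k + 2) := by
    intro s hs
    rw [mem_powersetCard] at hs
    rw [arrowMatrix_subtype_of_notMem p a c g (fun h => notMem_erase p _ (hs.1 h)), det_diagonal,
      prod_const, card_univ, Fintype.card_coe, hs.2]
  have hminor_of_mem : ∀ t ∈ powersetCard (k + 1) U,
      det (fun x y : (insert p t : Finset κ) => arrowMatrix p a c g x y)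
        = a ^ (k + 1) * c - a ^ k * ∑ x ∈ t, g x ^ 2 := by
    intro t ht
    rw [mem_powersetCard] at ht
    have hpt : p ∉ t := fun h => notMem_erase p _ (ht.1 h)
    have hsum : ∑ x ∈ univ.erase ⟨p, mem_insert_self p t⟩, (g ∘ Subtype.val) x ^ 2
        = ∑ x ∈ t, g x ^ 2 := by
      simp only [sum_erase_eq_sub (mem_univ _), Function.comp_apply]
      rw [sum_coe_sort (insert p t) (fun x => g x ^ 2), sum_insert hpt]
      simp
    rw [arrowMatrix_subtype_of_mem p a c g (mem_insert_self p t), det_arrowMatrix _ _ _ _ ha,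
      Fintype.card_coe, card_insert_of_notMem hpt, ht.2, hsum]
    rfl
  have hsplit := sum_powersetCard_succ_insert (notMem_erase p univ) (k + 1)
    (fun s => det (fun x y : s => arrowMatrix p a c g x y))
  rw [insert_erase (mem_univ p)] at hsplit
  rw [sigmaK, hsplit, sum_congr rfl hminor_of_notMem, sum_congr rfl hminor_of_mem,
    sum_sub_distrib, sum_const, sum_const, ← mul_sum, sum_powersetCard_sum, card_powersetCard,
    card_powersetCard, hU, show Fintype.card κ - 1 - 1 = Fintype.card κ - 2 by omega]
  simp only [nsmul_eq_mul]
  ring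

theorem sum_univ_erase_inr {ι M : Type*} [Fintype ι] [DecidableEq ι] [AddCommGroup M]
    (f : ι ⊕ Unit → M) : ∑ x ∈ univ.erase (Sum.inr ()), f x = ∑ i, f (Sum.inl i) := by
  rw [sum_erase_eq_sub (mem_univ _), Fintype.sum_sum_type]
  simp

section ExpParaboloid

variable {ι : Type*} [Fintype ι] [DecidableEq ι]

noncomputable def expParaboloid (h : ℝ → ℝ) (y : ι ⊕ Unit → ℝ) : ℝ :=
  (∑ i, y (Sum.inl i) ^ 2) * Real.exp (y (Sum.inr ())) + h (y (Sum.inr ()))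

theorem fderiv_expParaboloid_apply_single {h : ℝ → ℝ} {y : ι ⊕ Unit → ℝ}
    (hh : DifferentiableAt ℝ h (y (Sum.inr ()))) (j : ι ⊕ Unit) :
    fderiv ℝ (expParaboloid h) y (Pi.single j 1) =
      Sum.elim (fun i => 2 * y (Sum.inl i) * Real.exp (y (Sum.inr ())))
        (fun _ => (∑ i, y (Sum.inl i) ^ 2) * Real.exp (y (Sum.inr ())) + deriv h (y (Sum.inr ())))
        j := by
  have hd : HasFDerivAt (expParaboloid h) _ y :=
    ((HasFDerivAt.fun_sum (u := univ) fun i _ => (hasFDerivAt_apply (Sum.inl i) y).pow 2).mul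
      (hasFDerivAt_apply (Sum.inr ()) y).exp).add
      (hh.hasDerivAt.comp_hasFDerivAt y (hasFDerivAt_apply (Sum.inr ()) y))
  rw [hd.fderiv]
  cases j <;> simp [Pi.single_apply]
  ring

theorem hessian_expParaboloid {h : ℝ → ℝ} (hd1 : ∀ t, DifferentiableAt ℝ h t) {v : ι ⊕ Unit → ℝ}
    (hd2 : DifferentiableAt ℝ (deriv h) (v (Sum.inr ()))) :
    hessian (expParaboloid h) v = arrowMatrix (Sum.inr ()) (2 * Real.exp (v (Sum.inr ())))
      ((∑ i, v (Sum.inl i) ^ 2) * Real.exp (v (Sum.inr ())) + deriv (deriv h) (v (Sum.inr ())))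
      (fun x => 2 * v x * Real.exp (v (Sum.inr ()))) := by
  have hpartial_inl (i : ι) :
      (fun y : ι ⊕ Unit → ℝ => fderiv ℝ (expParaboloid h) y (Pi.single (Sum.inl i) 1))
        = fun y => 2 * y (Sum.inl i) * Real.exp (y (Sum.inr ())) :=
    funext fun y => fderiv_expParaboloid_apply_single (hd1 _) _
  have hpartial_inr :
      (fun y : ι ⊕ Unit → ℝ => fderiv ℝ (expParaboloid h) y (Pi.single (Sum.inr ()) 1))
        = expParaboloid (deriv h) :=
    funext fun y => fderiv_expParaboloid_apply_single (hd1 _) _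
  ext x (i | _)
  · have hd : HasFDerivAt (fun y : ι ⊕ Unit → ℝ => 2 * y (Sum.inl i) * Real.exp (y (Sum.inr ())))
        _ v :=
      ((hasFDerivAt_apply (Sum.inl i) v).const_mul 2).mul (hasFDerivAt_apply (Sum.inr ()) v).exp
    simp only [hessian, hpartial_inl, hd.fderiv]
    rcases x with x | _
    · rcases eq_or_ne x i with rfl | hx
      · simp [arrowMatrix, mul_comm]
      · simp [arrowMatrix, hx]
    · simp [arrowMatrix]
  · simp only [hessian, hpartial_inr, fderiv_expParaboloid_apply_single hd2]
    rcases x with x | _ <;> simp [arrowMatrix]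

end ExpParaboloid

theorem sigmaK_hessian_expParaboloid {ι : Type*} [Fintype ι] [DecidableEq ι] {j : ℕ}
    (hι : Fintype.card ι = 2 * j + 2) {h : ℝ → ℝ} (hd1 : ∀ t, DifferentiableAt ℝ h t)
    {v : ι ⊕ Unit → ℝ} (hd2 : DifferentiableAt ℝ (deriv h) (v (Sum.inr ()))) :
    sigmaK (j + 2) (hessian (expParaboloid h) v) =
      2 ^ (j + 2) * ((2 * j + 2).choose (j + 2) * Real.exp (v (Sum.inr ())) ^ (j + 2)
        + (2 * j + 1).choose j * Real.exp (v (Sum.inr ())) ^ (j + 1)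
          * deriv (deriv h) (v (Sum.inr ()))) := by
  set E := Real.exp (v (Sum.inr ()))
  have hsq : ∑ i, (2 * v (Sum.inl i) * E) ^ 2 = 4 * E ^ 2 * ∑ i, v (Sum.inl i) ^ 2 := by
    rw [mul_sum]
    exact sum_congr rfl fun _ _ => by ring
  have hmid : ((2 * j + 2).choose (j + 1) : ℝ) = 2 * (2 * j + 1).choose j := by
    rw [Nat.choose_succ_succ', Nat.choose_symm_half]
    push_cast
    ring
  rw [hessian_expParaboloid hd1 hd2, sigmaK_arrowMatrix _ (by positivity) _ _ j,
    sum_univ_erase_inr, hsq, Fintype.card_sum, hι, Fintype.card_unit,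
    show 2 * j + 2 + 1 - 1 = 2 * j + 2 by omega, show 2 * j + 2 + 1 - 2 = 2 * j + 1 by omega, hmid]
  ring

/-- For odd `n ≥ 3`, `k = (n+1)/2`, and any twice differentiable `h : ℝ → ℝ` with
`h''(t) = (1 − B e^{kt})/(A e^{(k−1)t})`, the function `u(x,t) = |x|² eᵗ + h(t)`
on `ℝ^{n-1} × ℝ` solves `σ_k(D²u) = 1`. -/
theorem solution_sigmaK_of_ode (n k : ℕ) (hn : 3 ≤ n) (hodd : Odd n)
    (hk : k = (n + 1) / 2) (A B : ℝ)
    (hA : A = 2 ^ (k - 1) * (((n - 2).choose (k - 2) : ℝ) + ((n - 2).choose (k - 1) : ℝ)))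
    (hB : B = 2 ^ k * ((n - 1).choose k : ℝ))
    (h : ℝ → ℝ)
    (hd1 : ∀ t, DifferentiableAt ℝ h t)
    (hd2 : ∀ t, DifferentiableAt ℝ (deriv h) t)
    (hODE : ∀ t, deriv (deriv h) t
      = (1 - B * Real.exp (k * t)) / (A * Real.exp (((k : ℝ) - 1) * t)))
    (u : (Fin (n - 1) ⊕ Unit → ℝ) → ℝ)
    (hu : u = fun v => (∑ i : Fin (n - 1), v (Sum.inl i) ^ 2) * Real.exp (v (Sum.inr ()))
      + h (v (Sum.inr ()))) :
    ∀ v, sigmaK k (hessian u v) = 1 := by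
  intro v
  obtain ⟨j, rfl⟩ : ∃ j, n = 2 * j + 3 := by
    obtain ⟨l, rfl⟩ := hodd
    exact ⟨l - 1, by omega⟩
  obtain rfl : k = j + 2 := by omega
  set t := v (Sum.inr ())
  have hA' : A = 2 ^ (j + 2) * (2 * j + 1).choose j := by
    rw [hA, show 2 * j + 3 - 2 = 2 * j + 1 by omega, show j + 2 - 2 = j by omega,
      show j + 2 - 1 = j + 1 by omega, Nat.choose_symm_half]
    ring
  have hB' : B = 2 ^ (j + 2) * (2 * j + 2).choose (j + 2) := hB
  have hODE_t :
      deriv (deriv h) t = (1 - B * Real.exp t ^ (j + 2)) / (A * Real.exp t ^ (j + 1)) := by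
    rw [hODE, ← Real.exp_nat_mul, ← Real.exp_nat_mul]
    push_cast
    ring_nf
  have hchoose_pos : (0 : ℝ) < (2 * j + 1).choose j := by
    exact_mod_cast Nat.choose_pos (by omega)
  have hu' : u = expParaboloid h := hu
  rw [hu', sigmaK_hessian_expParaboloid (by simp) hd1 (hd2 t), hODE_t, hA', hB']
  field_simp
  ring
end

section
/- Let u : ℝ³ → ℝ be defined by u(x, y, t) = (x² + y²)eᵗ + (1/4)e^{−t} − eᵗ. Then at every point p ∈ ℝ³, the Hessian matrix D²u(p) satisfies trace(D²u(p)) > 0 and σ₂(D²u(p)) = 1; in particular D²u(p) lies in Γ₂⁺, the connected component of the set of symmetric 3×3 real matrices M with σ₂(M) > 0 that contains the identity matrix. -/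
/-!
Differentiating twice gives `D²u(x, y, t)` explicitly; expanding its principal minors,
`σ₂ = 4e^{2t} - 4(x² + y²)e^{2t} + 2eᵗ · 2u_tt = 1` identically. So the continuous map
`p ↦ D²u(p)` sends the connected space `ℝ³` into `{σ₂ > 0}` and all Hessians lie in the component
of `D²u(0) = diag(2, 2, -3/4)`, which the straight segment joins to the identity inside `{σ₂ > 0}`.
-/

open Real

section PrincipalMinors

variable {ι : Type*} [DecidableEq ι]

def finTwoEquivPair {a b : ι} (hab : a ≠ b) : Fin 2 ≃ {x : ι // x ∈ ({a, b} : Finset ι)} where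
  toFun := ![⟨a, by simp⟩, ⟨b, by simp⟩]
  invFun x := if x.1 = a then 0 else 1
  left_inv i := by fin_cases i <;> simp [hab.symm]
  right_inv := by
    rintro ⟨x, hx⟩
    rcases Finset.mem_insert.1 hx with rfl | hx
    · simp
    · obtain rfl := Finset.mem_singleton.1 hx
      simp [hab.symm]

lemma det_principal_submatrix_pair (A : Matrix ι ι ℝ) {a b : ι} (hab : a ≠ b) :
    Matrix.det (fun i j : {x : ι // x ∈ ({a, b} : Finset ι)} => A i.1 j.1) =
      A a a * A b b - A a b * A b a := by
  change (A.submatrix Subtype.val Subtype.val).det = _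
  rw [← Matrix.det_submatrix_equiv_self (finTwoEquivPair hab), Matrix.det_fin_two]
  rfl

end PrincipalMinors

lemma sigmaK_two_fin_three (A : Matrix (Fin 3) (Fin 3) ℝ) :
    sigmaK 2 A = (A 0 0 * A 1 1 - A 0 1 * A 1 0) + (A 0 0 * A 2 2 - A 0 2 * A 2 0)
      + (A 1 1 * A 2 2 - A 1 2 * A 2 1) := by
  have hpairs : (Finset.univ : Finset (Fin 3)).powersetCard 2 = {{0, 1}, {0, 2}, {1, 2}} := by
    decide
  rw [sigmaK, hpairs, Finset.sum_insert (by decide), Finset.sum_insert (by decide),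
    Finset.sum_singleton, det_principal_submatrix_pair A (by decide),
    det_principal_submatrix_pair A (by decide), det_principal_submatrix_pair A (by decide)]
  ring

def symmSigmaTwoPos (ι : Type*) [Fintype ι] [DecidableEq ι] : Set (Matrix ι ι ℝ) :=
  {M | M.IsSymm ∧ 0 < sigmaK 2 M}

noncomputable def solution (v : Fin 3 → ℝ) : ℝ :=
  (v 0 ^ 2 + v 1 ^ 2) * exp (v 2) + 1 / 4 * exp (-v 2) - exp (v 2)

noncomputable def solutionGradient (v : Fin 3 → ℝ) : Fin 3 → ℝ :=
  ![2 * v 0 * exp (v 2), 2 * v 1 * exp (v 2),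
    (v 0 ^ 2 + v 1 ^ 2) * exp (v 2) - 1 / 4 * exp (-v 2) - exp (v 2)]

noncomputable def solutionHessian (v : Fin 3 → ℝ) : Matrix (Fin 3) (Fin 3) ℝ :=
  !![2 * exp (v 2), 0, 2 * v 0 * exp (v 2);
     0, 2 * exp (v 2), 2 * v 1 * exp (v 2);
     2 * v 0 * exp (v 2), 2 * v 1 * exp (v 2),
       (v 0 ^ 2 + v 1 ^ 2) * exp (v 2) + 1 / 4 * exp (-v 2) - exp (v 2)]

lemma fderiv_solution_apply_single (v : Fin 3 → ℝ) (j : Fin 3) :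
    fderiv ℝ solution v (Pi.single j 1) = solutionGradient v j := by
  unfold solution
  simp (disch := fun_prop) only [fderiv_fun_sub, fderiv_fun_add, fderiv_fun_mul,
    fderiv_fun_pow, fderiv_exp, fderiv_fun_neg, fderiv_apply, fderiv_fun_id]
  fin_cases j <;> simp [solutionGradient] <;> ring

lemma fderiv_solutionGradient_apply_single (v : Fin 3 → ℝ) (i j : Fin 3) :
    fderiv ℝ (fun w => solutionGradient w j) v (Pi.single i 1) = solutionHessian v i j := by
  fin_cases j <;>
  simp (disch := fun_prop) only [solutionGradient, Fin.zero_eta, Fin.mk_one, Fin.reduceFinMk,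
    Matrix.cons_val, fderiv_fun_sub, fderiv_fun_add, fderiv_fun_mul,
    fderiv_fun_pow, fderiv_exp, fderiv_fun_neg, fderiv_apply, fderiv_fun_id] <;>
  fin_cases i <;> simp [solutionHessian] <;> ring

lemma hessian_solution (v : Fin 3 → ℝ) : hessian solution v = solutionHessian v := by
  ext i j
  simp only [hessian, fderiv_solution_apply_single, fderiv_solutionGradient_apply_single]

lemma solutionHessian_isSymm (v : Fin 3 → ℝ) : (solutionHessian v).IsSymm := by
  ext i j
  fin_cases i <;> fin_cases j <;> rfl

lemma continuous_solutionHessian : Continuous solutionHessian := by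
  unfold solutionHessian
  fun_prop

lemma trace_solutionHessian_pos (v : Fin 3 → ℝ) : 0 < (solutionHessian v).trace := by
  have htrace : (solutionHessian v).trace =
      (3 + v 0 ^ 2 + v 1 ^ 2) * exp (v 2) + 1 / 4 * exp (-v 2) := by
    simp only [solutionHessian, Matrix.trace_fin_three, Matrix.of_apply, Matrix.cons_val',
      Matrix.cons_val_zero, Matrix.cons_val_fin_one, Matrix.cons_val_one, Matrix.cons_val]
    ring
  rw [htrace]
  positivity

lemma sigmaK_two_solutionHessian (v : Fin 3 → ℝ) : sigmaK 2 (solutionHessian v) = 1 := by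
  rw [sigmaK_two_fin_three]
  simp only [solutionHessian, exp_neg, Matrix.of_apply, Matrix.cons_val', Matrix.cons_val_zero,
    Matrix.cons_val_fin_one, Matrix.cons_val_one, Matrix.cons_val]
  field_simp
  ring

lemma segment_one_solutionHessian_zero_subset :
    segment ℝ 1 (solutionHessian 0) ⊆ symmSigmaTwoPos (Fin 3) := by
  rintro _ ⟨a, b, ha, hb, hab, rfl⟩
  refine ⟨(Matrix.isSymm_one.smul a).add ((solutionHessian_isSymm 0).smul b), ?_⟩
  have hfactor : sigmaK 2 (a • 1 + b • solutionHessian 0) = (a + 2 * b) * (3 * a + b / 2) := by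
    rw [sigmaK_two_fin_three]
    simp [solutionHessian]
    ring
  rw [hfactor]
  exact mul_pos (by linarith) (by linarith)

lemma range_solutionHessian_subset : Set.range solutionHessian ⊆ symmSigmaTwoPos (Fin 3) :=
  Set.range_subset_iff.2 fun v =>
    ⟨solutionHessian_isSymm v, (sigmaK_two_solutionHessian v).symm ▸ one_pos⟩

/-- The Hessian of `u(x, y, t) = (x² + y²)eᵗ + (1/4)e^{−t} − eᵗ` has positive trace and
`σ₂ = 1` everywhere; in particular it lies in `Γ₂⁺`, the connected component of
`{M symmetric : σ₂(M) > 0}` containing the identity. -/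
theorem explicit_solution_hessian_in_gamma2 (u : (Fin 3 → ℝ) → ℝ)
    (hu : u = fun v => (v 0 ^ 2 + v 1 ^ 2) * Real.exp (v 2)
      + (1 / 4) * Real.exp (-(v 2)) - Real.exp (v 2)) :
    ∀ p : Fin 3 → ℝ,
      0 < Matrix.trace (hessian u p) ∧
      sigmaK 2 (hessian u p) = 1 ∧
      hessian u p ∈ connectedComponentIn
        {M : Matrix (Fin 3) (Fin 3) ℝ | M.IsSymm ∧ 0 < sigmaK 2 M} 1 := by
  intro p
  obtain rfl : u = solution := hu
  rw [hessian_solution]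
  refine ⟨trace_solutionHessian_pos p, sigmaK_two_solutionHessian p, ?_⟩
  change _ ∈ connectedComponentIn (symmSigmaTwoPos (Fin 3)) 1
  have hzero : solutionHessian 0 ∈ connectedComponentIn (symmSigmaTwoPos (Fin 3)) 1 :=
    (convex_segment _ _).isPreconnected.subset_connectedComponentIn (left_mem_segment ℝ _ _)
      segment_one_solutionHessian_zero_subset (right_mem_segment ℝ _ _)
  rw [connectedComponentIn_eq hzero]
  exact (isPreconnected_range continuous_solutionHessian).subset_connectedComponentIn
    (Set.mem_range_self 0) range_solutionHessian_subset (Set.mem_range_self p)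
end
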